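/- Assume t ≥ 2 and that the t-th fundamental form of V at P satisfies dim_ℂ |I^t| = k − ℓ for an integer ℓ with 0 < ℓ ≤ k (i.e. |I^t| has projective dimension k − ℓ − 1). Let M := #{ I ∈ ℕ^k : |I| ≤ t−1 } and define Φ_{t−1} : U × ℂ^M → ℂ^{N+1} by Φ_{t−1}(u, λ) := ∑_{|I|≤t−1} λ_I x̂^I(u), a parametrization of the affine cone over the osculating variety Tan^{t−1}(V). Then for every λ ∈ ℂ^M the image of the derivative DΦ_{t−1}(u₀, λ) is contained in T^(t)(u₀), and rank DΦ_{t−1}(u₀, λ) ≤ d_{t−1} + (k − ℓ) + 1. In particular, since the expected dimension of Tan^{t−1}(V) is k + d_{t−1}, the variety V has (t−1)-th osculating defect at least ℓ. -/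

import Mathlib

/- Common setup: iterated partial derivatives, multi-indices, osculating spaces,
fundamental forms for a local parametrisation `x : ℂ^k → ℂ^N` of a variety
`V ⊂ ℙ^N`, lifted to `x̂ = (1, x) : ℂ^k → ℂ^{N+1}`. -/

open scoped BigOperators

noncomputable section

/-- Iterated partial derivative of `f` along a list of coordinate directions. -/
def pderivList {k : ℕ} {E : Type} [NormedAddCommGroup E] [NormedSpace ℂ E] :
    List (Fin k) → ((Fin k → ℂ) → E) → ((Fin k → ℂ) → E)
  | [], f => f
  | j :: L, f => fun u => fderiv ℂ (pderivList L f) u (Pi.single j 1)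

/-- The canonical list of coordinate directions attached to a multi-index `I : Fin k → ℕ`
(the direction `j` repeated `I j` times). -/
def idxList {k : ℕ} (I : Fin k → ℕ) : List (Fin k) :=
  (List.finRange k).flatMap fun j => List.replicate (I j) j

/-- The partial derivative `∂^I f = ∂^{|I|} f / ∂u₁^{i₁} ⋯ ∂u_k^{i_k}`. -/
def pd {k : ℕ} {E : Type} [NormedAddCommGroup E] [NormedSpace ℂ E]
    (I : Fin k → ℕ) (f : (Fin k → ℂ) → E) : (Fin k → ℂ) → E :=
  pderivList (idxList I) f

/-- The finset of multi-indices `I : Fin k → ℕ` of total degree `|I| ≤ r`. -/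
def degLE (k r : ℕ) : Finset (Fin k → ℕ) :=
  (Finset.Iic fun _ : Fin k => r).filter fun I => (∑ j, I j) ≤ r

/-- The finset of multi-indices `I : Fin k → ℕ` of total degree `|I| = r`. -/
def degEq (k r : ℕ) : Finset (Fin k → ℕ) :=
  (Finset.Iic fun _ : Fin k => r).filter fun I => (∑ j, I j) = r

/-- The lift `x̂(u) = (1, x(u))` of the parametrisation `x` to the affine cone `ℂ^{N+1}`. -/
def coneLift {k N : ℕ} (x : (Fin k → ℂ) → (Fin N → ℂ)) : (Fin k → ℂ) → (Fin (N + 1) → ℂ) :=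
  fun u => Fin.cons 1 (x u)

/-- `osc x̂ s u` is the affine cone `T^(s)(u)` over the `s`-th osculating space at the point of
parameter `u`: the span of all partial derivatives `x̂^I(u)` with `|I| ≤ s`. -/
def osc {k N : ℕ} (xhat : (Fin k → ℂ) → (Fin (N + 1) → ℂ)) (s : ℕ) (u : Fin k → ℂ) :
    Submodule ℂ (Fin (N + 1) → ℂ) :=
  Submodule.span ℂ {y | ∃ I : Fin k → ℕ, (∑ j, I j) ≤ s ∧ y = pd I xhat u}

/-- The degree-`r` form `F^r_ξ(v) = ξ(D^r x̂(u₀)(v,…,v))`, as a function of `v ∈ ℂ^k`. -/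
def formOf {k N : ℕ} (xhat : (Fin k → ℂ) → (Fin (N + 1) → ℂ)) (u₀ : Fin k → ℂ) (r : ℕ)
    (ξ : Module.Dual ℂ (Fin (N + 1) → ℂ)) : (Fin k → ℂ) → ℂ :=
  fun v => ξ (iteratedFDeriv ℂ r xhat u₀ fun _ => v)

/-- The `r`-th fundamental form `|I^r|` of `V` at `P`, as the set of the forms `F^r_ξ` for `ξ`
a linear functional vanishing on `T^(r-1)(u₀)`. -/
def fundSet {k N : ℕ} (xhat : (Fin k → ℂ) → (Fin (N + 1) → ℂ)) (u₀ : Fin k → ℂ) (r : ℕ) :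
    Set ((Fin k → ℂ) → ℂ) :=
  { F | ∃ ξ : Module.Dual ℂ (Fin (N + 1) → ℂ),
      (∀ y ∈ osc xhat (r - 1) u₀, ξ y = 0) ∧ F = formOf xhat u₀ r ξ }

/-- The `r`-th fundamental form `|I^r|` as a subspace of the space of functions of `v`. -/
def fundForm {k N : ℕ} (xhat : (Fin k → ℂ) → (Fin (N + 1) → ℂ)) (u₀ : Fin k → ℂ) (r : ℕ) :
    Submodule ℂ ((Fin k → ℂ) → ℂ) :=
  Submodule.span ℂ (fundSet xhat u₀ r)

/-- The linear map sending the coefficients `(E_I)_{|I|=t}` of a degree-`t` form to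
`∑_{|I|=t} E_I x̂^I(u₀) ∈ ℂ^{N+1}`; a form is the symbol of a Laplace equation of order `t`
iff its coefficients are mapped into `T^(t-1)(u₀)`. -/
def symbolMap {k N : ℕ} (xhat : (Fin k → ℂ) → (Fin (N + 1) → ℂ)) (u₀ : Fin k → ℂ) (t : ℕ) :
    ({I : Fin k → ℕ // I ∈ degEq k t} → ℂ) →ₗ[ℂ] (Fin (N + 1) → ℂ) where
  toFun E := ∑ I : {I : Fin k → ℕ // I ∈ degEq k t}, E I • pd I.1 xhat u₀
  map_add' a b := by simp [add_smul, Finset.sum_add_distrib]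
  map_smul' c a := by simp [smul_smul, Finset.smul_sum]

/-- The parametrisation `Φ_t(u, λ) = ∑_{|I| ≤ t} λ_I x̂^I(u)` of the affine cone over the
`t`-th osculating variety `Tan^t(V)`. -/
def tanPhi {k N : ℕ} (xhat : (Fin k → ℂ) → (Fin (N + 1) → ℂ)) (t : ℕ) :
    ((Fin k → ℂ) × ({I : Fin k → ℕ // I ∈ degLE k t} → ℂ)) → (Fin (N + 1) → ℂ) :=
  fun p => ∑ I : {I : Fin k → ℕ // I ∈ degLE k t}, p.2 I • pd I.1 xhat p.1

/-- The rank of the Jacobian matrix of a linear system `S` of degree-`r` forms: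
the maximum over `v ∈ ℂ^k` of the dimension of the span of the gradients at `v`
of the members of `S`. -/
def jacRank (k : ℕ) (S : Set ((Fin k → ℂ) → ℂ)) : ℕ :=
  sSup {r : ℕ | ∃ v : Fin k → ℂ,
    r = Module.finrank ℂ
      ↥(Submodule.span ℂ {g : Fin k → ℂ | ∃ F ∈ S, g = fun j => pd (Pi.single j 1) F v})}

/-- The coefficients of the reducible degree-`(t+1)` form
`(∑_j w_j v_j) · (∑_{|I| = t} λ_I v^I)`. -/
def prodSymb {k : ℕ} (t : ℕ) (w : Fin k → ℂ) (lam : {I : Fin k → ℕ // I ∈ degLE k t} → ℂ)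
    (J : Fin k → ℕ) : ℂ :=
  ∑ j : Fin k,
    if h : 1 ≤ J j ∧ (J - Pi.single j 1 : Fin k → ℕ) ∈ degLE k t ∧
        (∑ i, (J - Pi.single j 1 : Fin k → ℕ) i) = t
    then w j * lam ⟨(J - Pi.single j 1 : Fin k → ℕ), h.2.1⟩ else 0

/-!
The derivative of `Φ_{t-1}` at `(u₀, λ)` is
`(w, μ) ↦ ∑_I (λ_I ∑_j w_j x̂^{I+e_j}(u₀) + μ_I x̂^I(u₀))`, so its image lies in `T^(t)(u₀)`, and it
remains to show `dim T^(t)(u₀) ≤ dim T^(t-1)(u₀) + dim |I^t|`. The fundamental form `|I^t|` is the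
image of the annihilator of `T^(t-1)(u₀)` under `ξ ↦ F^t_ξ`. A functional `ξ` in the kernel of this
map vanishes on all of `T^(t)(u₀)`: the polynomial `F^t_ξ` is zero, so each of its coefficients
`(t!/J!) ξ(x̂^J(u₀))`, `|J| = t`, is zero. The bound then follows by counting dimensions.
-/

open Module

theorem Subspace.finrank_le_finrank_add_finrank_map_dualAnnihilator {K V W : Type*} [Field K]
    [AddCommGroup V] [Module K V] [FiniteDimensional K V] [AddCommGroup W] [Module K W]
    (A T : Subspace K V) (L : Dual K V →ₗ[K] W)
    (hT : ∀ ξ ∈ A.dualAnnihilator, L ξ = 0 → T ≤ LinearMap.ker ξ) :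
    finrank K T ≤ finrank K A + finrank K (A.dualAnnihilator.map L) := by
  let L' := L.domRestrict A.dualAnnihilator
  let Z := (LinearMap.ker L').map A.dualAnnihilator.subtype
  have hTZ : T ≤ Z.dualCoannihilator := by
    intro y hy
    rw [Submodule.mem_dualCoannihilator]
    rintro _ ⟨ξ, hξ, rfl⟩
    exact hT ξ ξ.2 hξ hy
  have h₁ := Subspace.finrank_add_finrank_dualAnnihilator_eq A
  have h₂ := LinearMap.finrank_range_add_finrank_ker (V := A.dualAnnihilator) (V₂ := W) L'
  have h₃ := Subspace.finrank_add_finrank_dualCoannihilator_eq Z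
  have h₄ : finrank K Z = finrank K (LinearMap.ker L') := Submodule.finrank_map_subtype_eq _ _
  rw [LinearMap.range_domRestrict] at h₂
  have := Submodule.finrank_mono hTZ
  omega

def countVec {n : ℕ} {ι : Type*} [DecidableEq ι] (d : Fin n → ι) : ι → ℕ :=
  fun j => (List.ofFn d).count j

theorem prod_apply_eq_prod_pow_countVec {n : ℕ} {ι M : Type*} [Fintype ι] [DecidableEq ι]
    [CommMonoid M] (d : Fin n → ι) (v : ι → M) :
    ∏ s, v (d s) = ∏ j, v j ^ countVec d j := by
  rw [← List.prod_ofFn, ← Function.comp_def v d, ← List.map_ofFn, Finset.prod_list_map_count]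
  refine Finset.prod_subset (Finset.subset_univ _) fun j _ hj => ?_
  rw [List.count_eq_zero_of_not_mem (mt List.mem_toFinset.2 hj), pow_zero]

theorem count_idxList {k : ℕ} (I : Fin k → ℕ) (j : Fin k) : (idxList I).count j = I j := by
  simp [idxList, List.count_flatMap, List.count_replicate, ← Fin.sum_univ_def]

theorem length_idxList {k : ℕ} (I : Fin k → ℕ) : (idxList I).length = ∑ j, I j := by
  simp [idxList, List.length_flatMap, Fin.sum_univ_def]

theorem exists_countVec_eq {k : ℕ} (J : Fin k → ℕ) :
    ∃ d : Fin (∑ j, J j) → Fin k, countVec d = J := by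
  rw [← length_idxList J]
  exact ⟨(idxList J).get, funext fun j => by rw [countVec, List.ofFn_get, count_idxList]⟩

theorem eq_zero_of_forall_sum_prod_mul_eq_zero {K : Type*} [Field K] [CharZero K] {k n : ℕ}
    (c : (Fin k → ℕ) → K)
    (h : ∀ v : Fin k → K, ∑ d : Fin n → Fin k, (∏ s, v (d s)) * c (countVec d) = 0)
    (J : Fin k → ℕ) (hJ : ∑ j, J j = n) : c J = 0 := by
  let P : MvPolynomial (Fin k) K :=
    ∑ d : Fin n → Fin k,
      MvPolynomial.monomial (Finsupp.equivFunOnFinite.symm (countVec d)) (c (countVec d))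
  have hP : P = 0 := MvPolynomial.funext fun v => by
    simpa [P, MvPolynomial.eval_monomial, Finsupp.prod_fintype, prod_apply_eq_prod_pow_countVec,
      mul_comm] using h v
  have hcoeff : P.coeff (Finsupp.equivFunOnFinite.symm J)
      = (Finset.univ.filter fun d : Fin n → Fin k => countVec d = J).card * c J := by
    simp only [P, MvPolynomial.coeff_sum, MvPolynomial.coeff_monomial,
      Finsupp.equivFunOnFinite.symm.injective.eq_iff]
    rw [← Finset.sum_filter, Finset.sum_congr rfl fun d hd => by rw [(Finset.mem_filter.1 hd).2],
      Finset.sum_const, nsmul_eq_mul]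
  obtain ⟨d, hd⟩ := exists_countVec_eq J
  subst hJ
  have hcard : (Finset.univ.filter fun d' : Fin (∑ j, J j) → Fin k => countVec d' = J).card ≠ 0 :=
    Finset.card_ne_zero_of_mem (Finset.mem_filter.2 ⟨Finset.mem_univ d, hd⟩)
  rw [hP, MvPolynomial.coeff_zero, eq_comm, mul_eq_zero] at hcoeff
  exact hcoeff.resolve_left (Nat.cast_ne_zero.2 hcard)

section PartialDerivatives

variable {k : ℕ} {E : Type} [NormedAddCommGroup E] [NormedSpace ℂ E]
  {U : Set (Fin k → ℂ)} {f : (Fin k → ℂ) → E} {u : Fin k → ℂ}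

theorem contDiffOn_pderivList (hU : IsOpen U) (hf : ContDiffOn ℂ (⊤ : ℕ∞) f U)
    (L : List (Fin k)) : ContDiffOn ℂ (⊤ : ℕ∞) (pderivList L f) U := by
  induction L with
  | nil => exact hf
  | cons j L ih =>
    exact (ih.fderiv_of_isOpen hU (by exact_mod_cast le_top)).clm_apply contDiffOn_const

theorem differentiableAt_pd (hU : IsOpen U) (hf : ContDiffOn ℂ (⊤ : ℕ∞) f U) (hu : u ∈ U)
    (I : Fin k → ℕ) : DifferentiableAt ℂ (pd I f) u :=
  ((contDiffOn_pderivList hU hf _).contDiffAt (hU.mem_nhds hu)).differentiableAt (by simp)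

theorem pderivList_cons_cons_comm (hU : IsOpen U) (hf : ContDiffOn ℂ (⊤ : ℕ∞) f U)
    (hu : u ∈ U) (a b : Fin k) (L : List (Fin k)) :
    pderivList (a :: b :: L) f u = pderivList (b :: a :: L) f u := by
  have hg := (contDiffOn_pderivList hU hf L).contDiffAt (hU.mem_nhds hu)
  have hdg : DifferentiableAt ℂ (fderiv ℂ (pderivList L f)) u :=
    (hg.fderiv_right (m := 1) (WithTop.coe_le_coe.2 le_top)).differentiableAt one_ne_zero
  have hsecond : ∀ c d : Fin k, pderivList (c :: d :: L) f u
      = fderiv ℂ (fderiv ℂ (pderivList L f)) u (Pi.single c 1) (Pi.single d 1) := fun c d => by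
    simp [pderivList, fderiv_clm_apply hdg (differentiableAt_const _)]
  rw [hsecond, hsecond]
  exact hg.isSymmSndFDerivAt
    (by rw [minSmoothness_of_isRCLikeNormedField]; exact WithTop.coe_le_coe.2 le_top) _ _

theorem pderivList_eq_of_perm (hU : IsOpen U) (hf : ContDiffOn ℂ (⊤ : ℕ∞) f U)
    {L₁ L₂ : List (Fin k)} (hp : L₁.Perm L₂) (hu : u ∈ U) :
    pderivList L₁ f u = pderivList L₂ f u := by
  induction hp generalizing u with
  | nil => rfl
  | @cons j l₁ l₂ _ ih =>
    have : pderivList l₁ f =ᶠ[nhds u] pderivList l₂ f :=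
      Filter.eventuallyEq_of_mem (hU.mem_nhds hu) fun _ hz => ih hz
    exact DFunLike.congr_fun this.fderiv_eq _
  | swap a b L => exact pderivList_cons_cons_comm hU hf hu b a L
  | trans _ _ ih₁ ih₂ => exact (ih₁ hu).trans (ih₂ hu)

theorem pderivList_eq_pd (hU : IsOpen U) (hf : ContDiffOn ℂ (⊤ : ℕ∞) f U) (hu : u ∈ U)
    {L : List (Fin k)} {I : Fin k → ℕ} (h : ∀ j, L.count j = I j) :
    pderivList L f u = pd I f u :=
  pderivList_eq_of_perm hU hf (List.perm_iff_count.2 fun j => by rw [h, count_idxList]) hu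

theorem iteratedFDeriv_apply_single_eq_pderivList (hU : IsOpen U)
    (hf : ContDiffOn ℂ (⊤ : ℕ∞) f U) {n : ℕ} (d : Fin n → Fin k) (hu : u ∈ U) :
    iteratedFDeriv ℂ n f u (fun s => Pi.single (d s) 1) = pderivList (List.ofFn d) f u := by
  induction n generalizing u with
  | zero => simp [pderivList]
  | succ n ih =>
    have hdiff : DifferentiableAt ℂ (iteratedFDeriv ℂ n f) u :=
      (hf.contDiffAt (hU.mem_nhds hu)).differentiableAt_iteratedFDeriv
        (by exact_mod_cast WithTop.coe_lt_top _)
    have htail : (fun z => iteratedFDeriv ℂ n f z (fun s => Pi.single (d s.succ) 1))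
        =ᶠ[nhds u] pderivList (List.ofFn fun s => d s.succ) f :=
      Filter.eventuallyEq_of_mem (hU.mem_nhds hu) fun _ hz => ih _ hz
    rw [iteratedFDeriv_succ_apply_left, List.ofFn_succ,
      ← fderiv_continuousMultilinear_apply_const_apply hdiff]
    exact DFunLike.congr_fun htail.fderiv_eq _

theorem iteratedFDeriv_apply_single_eq_pd (hU : IsOpen U) (hf : ContDiffOn ℂ (⊤ : ℕ∞) f U)
    {n : ℕ} (d : Fin n → Fin k) (hu : u ∈ U) :
    iteratedFDeriv ℂ n f u (fun s => Pi.single (d s) 1) = pd (countVec d) f u := by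
  rw [iteratedFDeriv_apply_single_eq_pderivList hU hf d hu]
  exact pderivList_eq_pd hU hf hu fun _ => rfl

theorem iteratedFDeriv_apply_const_eq_sum (hU : IsOpen U) (hf : ContDiffOn ℂ (⊤ : ℕ∞) f U)
    {n : ℕ} (hu : u ∈ U) (v : Fin k → ℂ) :
    iteratedFDeriv ℂ n f u (fun _ => v)
      = ∑ d : Fin n → Fin k, (∏ s, v (d s)) • pd (countVec d) f u := by
  have hv : (fun _ : Fin n => v) = fun _ => ∑ j, v j • (Pi.single j 1 : Fin k → ℂ) :=
    funext fun _ => by simp [← Pi.single_smul, Finset.univ_sum_single]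
  rw [hv, ContinuousMultilinearMap.map_sum]
  refine Finset.sum_congr rfl fun d _ => ?_
  rw [ContinuousMultilinearMap.map_smul_univ, iteratedFDeriv_apply_single_eq_pd hU hf d hu]

theorem map_pd_eq_zero_of_forall_map_iteratedFDeriv_eq_zero (hU : IsOpen U)
    (hf : ContDiffOn ℂ (⊤ : ℕ∞) f U) (hu : u ∈ U) {n : ℕ} (ξ : E →ₗ[ℂ] ℂ)
    (h : ∀ v, ξ (iteratedFDeriv ℂ n f u fun _ => v) = 0) (J : Fin k → ℕ) (hJ : ∑ j, J j = n) :
    ξ (pd J f u) = 0 :=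
  eq_zero_of_forall_sum_prod_mul_eq_zero (fun I => ξ (pd I f u))
    (fun v => by simpa [iteratedFDeriv_apply_const_eq_sum hU hf hu] using h v) J hJ

theorem fderiv_pd_apply (hU : IsOpen U) (hf : ContDiffOn ℂ (⊤ : ℕ∞) f U) (hu : u ∈ U)
    (I : Fin k → ℕ) (w : Fin k → ℂ) :
    fderiv ℂ (pd I f) u w = ∑ j, w j • pd (I + Pi.single j 1) f u := by
  conv_lhs => rw [← Finset.univ_sum_single w]
  simp only [map_sum]
  refine Finset.sum_congr rfl fun j _ => ?_
  rw [show (Pi.single j (w j) : Fin k → ℂ) = w j • Pi.single j 1 by simp [← Pi.single_smul'],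
    map_smul]
  congr 1
  refine pderivList_eq_pd (L := j :: idxList I) hU hf hu fun a => ?_
  rw [List.count_cons, count_idxList]
  by_cases h : a = j
  · simp [h]
  · simp [h, Ne.symm h]

end PartialDerivatives

section OsculatingSpaces

variable {k N : ℕ} {xhat : (Fin k → ℂ) → (Fin (N + 1) → ℂ)} {U : Set (Fin k → ℂ)}
  {u : Fin k → ℂ}

theorem pd_mem_osc {s : ℕ} {I : Fin k → ℕ} (h : ∑ j, I j ≤ s) : pd I xhat u ∈ osc xhat s u :=
  Submodule.subset_span ⟨I, h, rfl⟩

theorem fderiv_tanPhi_apply {s : ℕ} (hd : ∀ I, DifferentiableAt ℂ (pd I xhat) u)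
    (lam : {I : Fin k → ℕ // I ∈ degLE k s} → ℂ)
    (q : (Fin k → ℂ) × ({I : Fin k → ℕ // I ∈ degLE k s} → ℂ)) :
    fderiv ℂ (tanPhi xhat s) (u, lam) q
      = ∑ I, (lam I • fderiv ℂ (pd I.1 xhat) u q.1 + q.2 I • pd I.1 xhat u) := by
  have hterm : ∀ I : {I : Fin k → ℕ // I ∈ degLE k s},
      HasFDerivAt (fun p : (Fin k → ℂ) × ({I : Fin k → ℕ // I ∈ degLE k s} → ℂ) =>
        p.2 I • pd I.1 xhat p.1)
      (lam I • (fderiv ℂ (pd I.1 xhat) u).comp (.fst ℂ _ _)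
        + ((ContinuousLinearMap.proj I).comp (.snd ℂ _ _)).smulRight (pd I.1 xhat u)) (u, lam) :=
    fun I => ((ContinuousLinearMap.proj I).comp (.snd ℂ _ _)).hasFDerivAt.fun_smul
      ((hd I.1).hasFDerivAt.comp (f := Prod.fst) (u, lam) hasFDerivAt_fst)
  have hΦ : HasFDerivAt (tanPhi xhat s) _ (u, lam) := HasFDerivAt.fun_sum fun I _ => hterm I
  rw [hΦ.fderiv]
  simp

theorem fderiv_tanPhi_mem_osc_succ (hU : IsOpen U) (hx : ContDiffOn ℂ (⊤ : ℕ∞) xhat U)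
    (hu : u ∈ U) {s : ℕ} (lam : {I : Fin k → ℕ // I ∈ degLE k s} → ℂ)
    (q : (Fin k → ℂ) × ({I : Fin k → ℕ // I ∈ degLE k s} → ℂ)) :
    fderiv ℂ (tanPhi xhat s) (u, lam) q ∈ osc xhat (s + 1) u := by
  rw [fderiv_tanPhi_apply (fun I => differentiableAt_pd hU hx hu I) lam q]
  refine Submodule.sum_mem _ fun I _ => Submodule.add_mem _ ?_ ?_
  · have hI : ∑ j, I.1 j ≤ s := (Finset.mem_filter.1 I.2).2
    rw [fderiv_pd_apply hU hx hu]
    refine Submodule.smul_mem _ _ (Submodule.sum_mem _ fun j _ => Submodule.smul_mem _ _ ?_)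
    exact pd_mem_osc (by simpa [Finset.sum_add_distrib] using hI)
  · exact Submodule.smul_mem _ _ (pd_mem_osc (by linarith [(Finset.mem_filter.1 I.2).2]))

end OsculatingSpaces

section FundamentalForms

variable {k N : ℕ} {xhat : (Fin k → ℂ) → (Fin (N + 1) → ℂ)} {u₀ : Fin k → ℂ}

def formOfₗ (xhat : (Fin k → ℂ) → (Fin (N + 1) → ℂ)) (u₀ : Fin k → ℂ) (r : ℕ) :
    Dual ℂ (Fin (N + 1) → ℂ) →ₗ[ℂ] ((Fin k → ℂ) → ℂ) where
  toFun := formOf xhat u₀ r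
  map_add' _ _ := rfl
  map_smul' _ _ := rfl

theorem fundForm_eq_map (r : ℕ) :
    fundForm xhat u₀ r = (osc xhat (r - 1) u₀).dualAnnihilator.map (formOfₗ xhat u₀ r) := by
  rw [fundForm, ← Submodule.span_eq (Submodule.map _ _)]
  congr 1
  ext F
  simp only [fundSet, Set.mem_ofPred_eq, SetLike.mem_coe, Submodule.mem_map,
    Submodule.mem_dualAnnihilator]
  exact ⟨fun ⟨ξ, hξ, hF⟩ => ⟨ξ, hξ, hF.symm⟩, fun ⟨ξ, hξ, hF⟩ => ⟨ξ, hξ, hF.symm⟩⟩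

theorem osc_le_ker_of_formOf_eq_zero {U : Set (Fin k → ℂ)} (hU : IsOpen U)
    (hx : ContDiffOn ℂ (⊤ : ℕ∞) xhat U) (hu₀ : u₀ ∈ U) {t : ℕ}
    {ξ : Dual ℂ (Fin (N + 1) → ℂ)} (hξ : ξ ∈ (osc xhat (t - 1) u₀).dualAnnihilator)
    (hF : formOf xhat u₀ t ξ = 0) : osc xhat t u₀ ≤ LinearMap.ker ξ := by
  refine Submodule.span_le.2 ?_
  rintro _ ⟨J, hJ, rfl⟩
  by_cases hle : ∑ j, J j ≤ t - 1
  · exact (Submodule.mem_dualAnnihilator ξ).1 hξ _ (pd_mem_osc hle)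
  · exact map_pd_eq_zero_of_forall_map_iteratedFDeriv_eq_zero hU hx hu₀ ξ (congrFun hF) J
      (by omega)

theorem finrank_osc_le_finrank_osc_add_finrank_fundForm {U : Set (Fin k → ℂ)} (hU : IsOpen U)
    (hx : ContDiffOn ℂ (⊤ : ℕ∞) xhat U) (hu₀ : u₀ ∈ U) (t : ℕ) :
    finrank ℂ (osc xhat t u₀)
      ≤ finrank ℂ (osc xhat (t - 1) u₀) + finrank ℂ (fundForm xhat u₀ t) := by
  rw [fundForm_eq_map]
  exact Subspace.finrank_le_finrank_add_finrank_map_dualAnnihilator _ _ _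
    fun _ hξ hF => osc_le_ker_of_formOf_eq_zero hU hx hu₀ hξ hF

end FundamentalForms

theorem coneLift_contDiffOn {k N : ℕ} {U : Set (Fin k → ℂ)} {x : (Fin k → ℂ) → (Fin N → ℂ)}
    (hx : ContDiffOn ℂ (⊤ : ℕ∞) x U) : ContDiffOn ℂ (⊤ : ℕ∞) (coneLift x) U :=
  contDiffOn_pi.2 fun i => Fin.cases contDiffOn_const (fun i => contDiffOn_pi.1 hx i) i

theorem osculating_defect_of_small_fundamental_form_general (k N t ℓ : ℕ)
    (ht : 2 ≤ t) (hlk : ℓ ≤ k)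
    (U : Set (Fin k → ℂ)) (hU : IsOpen U) (u₀ : Fin k → ℂ) (hu₀ : u₀ ∈ U)
    (x : (Fin k → ℂ) → (Fin N → ℂ)) (hx : ContDiffOn ℂ (⊤ : ℕ∞) x U)
    (hff : Module.finrank ℂ ↥(fundForm (coneLift x) u₀ t) = k - ℓ) :
    ∀ lam : {I : Fin k → ℕ // I ∈ degLE k (t - 1)} → ℂ,
      (∀ q : (Fin k → ℂ) × ({I : Fin k → ℕ // I ∈ degLE k (t - 1)} → ℂ),
          fderiv ℂ (tanPhi (coneLift x) (t - 1)) (u₀, lam) q ∈ osc (coneLift x) t u₀) ∧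
        Module.finrank ℂ
            ↥(LinearMap.range (fderiv ℂ (tanPhi (coneLift x) (t - 1)) (u₀, lam) :
              ((Fin k → ℂ) × ({I : Fin k → ℕ // I ∈ degLE k (t - 1)} → ℂ)) →ₗ[ℂ] (Fin (N + 1) → ℂ))) ≤
          Module.finrank ℂ ↥(osc (coneLift x) (t - 1) u₀) + (k - ℓ) ∧
        Module.finrank ℂ
            ↥(LinearMap.range (fderiv ℂ (tanPhi (coneLift x) (t - 1)) (u₀, lam) :
              ((Fin k → ℂ) × ({I : Fin k → ℕ // I ∈ degLE k (t - 1)} → ℂ)) →ₗ[ℂ] (Fin (N + 1) → ℂ))) + ℓ ≤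
          k + Module.finrank ℂ ↥(osc (coneLift x) (t - 1) u₀) := by
  intro lam
  have hxhat := coneLift_contDiffOn hx
  have hmem : ∀ q, fderiv ℂ (tanPhi (coneLift x) (t - 1)) (u₀, lam) q ∈ osc (coneLift x) t u₀ :=
    fun q => by
      simpa only [Nat.sub_add_cancel (by omega : 1 ≤ t)] using
        fderiv_tanPhi_mem_osc_succ hU hxhat hu₀ lam q
  have hrank : finrank ℂ (LinearMap.range (fderiv ℂ (tanPhi (coneLift x) (t - 1)) (u₀, lam) :
      ((Fin k → ℂ) × ({I : Fin k → ℕ // I ∈ degLE k (t - 1)} → ℂ)) →ₗ[ℂ] (Fin (N + 1) → ℂ)))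
      ≤ finrank ℂ (osc (coneLift x) (t - 1) u₀) + (k - ℓ) :=
    calc _ ≤ finrank ℂ (osc (coneLift x) t u₀) :=
          Submodule.finrank_mono (by rintro _ ⟨q, rfl⟩; exact hmem q)
      _ ≤ _ := finrank_osc_le_finrank_osc_add_finrank_fundForm hU hxhat hu₀ t
      _ = _ := by rw [hff]
  exact ⟨hmem, hrank, by omega⟩

/-- If `dim_ℂ |I^t| = k - ℓ` with `0 < ℓ ≤ k`, then for every `λ` the derivative of the
parametrisation `Φ_{t-1}(u, λ) = ∑_{|I| ≤ t-1} λ_I x̂^I(u)` of the cone over `Tan^{t-1}(V)` at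
`(u₀, λ)` has image inside `T^(t)(u₀)` and rank at most `d_{t-1} + (k - ℓ) + 1`; in particular
`V` has `(t-1)`-th osculating defect at least `ℓ`. -/
theorem osculating_defect_of_small_fundamental_form (k N t ℓ : ℕ) (hk : 1 ≤ k) (hN : 1 ≤ N)
    (ht : 2 ≤ t) (hl : 0 < ℓ) (hlk : ℓ ≤ k)
    (U : Set (Fin k → ℂ)) (hU : IsOpen U) (u₀ : Fin k → ℂ) (hu₀ : u₀ ∈ U)
    (x : (Fin k → ℂ) → (Fin N → ℂ)) (hx : ContDiffOn ℂ (⊤ : ℕ∞) x U)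
    (hff : Module.finrank ℂ ↥(fundForm (coneLift x) u₀ t) = k - ℓ) :
    ∀ lam : {I : Fin k → ℕ // I ∈ degLE k (t - 1)} → ℂ,
      (∀ q : (Fin k → ℂ) × ({I : Fin k → ℕ // I ∈ degLE k (t - 1)} → ℂ),
          fderiv ℂ (tanPhi (coneLift x) (t - 1)) (u₀, lam) q ∈ osc (coneLift x) t u₀) ∧
        Module.finrank ℂ
            ↥(LinearMap.range (fderiv ℂ (tanPhi (coneLift x) (t - 1)) (u₀, lam) :
              ((Fin k → ℂ) × ({I : Fin k → ℕ // I ∈ degLE k (t - 1)} → ℂ)) →ₗ[ℂ] (Fin (N + 1) → ℂ))) ≤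
          Module.finrank ℂ ↥(osc (coneLift x) (t - 1) u₀) + (k - ℓ) ∧
        Module.finrank ℂ
            ↥(LinearMap.range (fderiv ℂ (tanPhi (coneLift x) (t - 1)) (u₀, lam) :
              ((Fin k → ℂ) × ({I : Fin k → ℕ // I ∈ degLE k (t - 1)} → ℂ)) →ₗ[ℂ] (Fin (N + 1) → ℂ))) + ℓ ≤
          k + Module.finrank ℂ ↥(osc (coneLift x) (t - 1) u₀) :=
  osculating_defect_of_small_fundamental_form_general k N t ℓ ht hlk U hU u₀ hu₀ x hx hff
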